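/- In a regular execution, if a process u never changes its color, then the execution has a suffix in which no neighbor of u changes its color; consequently, if some process keeps its color forever, the execution has a suffix where no process at all changes its color. -/

import Mathlib

/-!
Only R1 and R3 change a color. Suppose the color of `u` is eventually constant, equal to `c`.
If afterwards a neighbor `v` changes to a color other than `c`, it has just become `Power` (R1)
or a childless leaf with a parent (R3). Since its neighbor `u` wears another color, `v` can then
never satisfy `EndFirstPhase`, so the only rule it can execute is R5, which makes it `Power` and
keeps its color, and a `Power` process in that situation is frozen. Hence, once `u` is settled,
every color change of `v` either lands on `c` or is its last one, so `v` changes color at most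
twice more. Connectivity spreads eventual constancy to all processes, and finiteness yields a
common suffix.
-/

namespace BFS

inductive Status : Type
  | Idle | Working | Power | WeakE | StrongE
deriving DecidableEq

open Status

inductive Rule (V : Type) : Type
  | RC1 | RC2 | RC3 | RC4 | RC5 | RC6
  | R1 | R2
  | R3 (v : V)
  | R4 | R5 | R6 | R7
deriving DecidableEq

structure ProcState (V : Type) where
  P : Option V
  TS : Option V
  C : Bool
  S : Status
  ph : Bool

abbrev Config (V : Type) := V → ProcState V

variable {V : Type} [Fintype V] [DecidableEq V]

/-- Erroneous statuses. -/
def Erroneous (s : Status) : Prop := s = WeakE ∨ s = StrongE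

/-- The children of `u`: neighbors whose parent pointer designates `u`. -/
def Child (G : SimpleGraph V) (c : Config V) (u : V) : Set V :=
  {v | G.Adj u v ∧ (c v).P = some u}

/-- Closed neighborhood `N[u]`. -/
def ClosedNbr (G : SimpleGraph V) (u : V) : Set V := insert u (G.neighborSet u)

def StrongConflict (G : SimpleGraph V) (c : Config V) (u : V) : Prop :=
  (c u).S ≠ StrongE ∧
    ∃ w ∈ ClosedNbr G u, ∃ v ∈ ClosedNbr G u,
      (c v).C ≠ (c u).C ∧ (c w).S = Power ∧ (c v).S = Power

def Conflict (G : SimpleGraph V) (r : V) (c : Config V) (u : V) : Prop :=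
  (u ≠ r ∧ (c u).P ≠ none ∧
      ∃ v ∈ G.neighborSet u, (c v).S = Power ∧ (c v).C ≠ (c u).C) ∨
  (u = r ∧ (c u).S ≠ StrongE ∧
      ∃ v ∈ G.neighborSet u, (c v).S = Power ∧
        ((c v).C ≠ (c u).C ∨ Child G c u = ∅))

def Detached (G : SimpleGraph V) (r : V) (c : Config V) (u : V) : Prop :=
  Child G c u = ∅ ∧ ((c u).P = none ∨ u = r) ∧ (c u).S ≠ Power

def StrongEReady (G : SimpleGraph V) (c : Config V) (u : V) : Prop :=
  (c u).S = StrongE ∧ ∀ v ∈ G.neighborSet u, (c v).S ≠ Power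

def PowerFaulty (G : SimpleGraph V) (c : Config V) (u : V) : Prop :=
  (c u).S = Power ∧ ∃ v ∈ G.neighborSet u, (c v).S = StrongE

def Faulty (G : SimpleGraph V) (r : V) (c : Config V) (u : V) : Prop :=
  u ≠ r ∧ ∃ p, (c u).P = some p ∧ ¬ Erroneous (c p).S ∧
    (Erroneous (c u).S ∨
     (c u).C ≠ (c p).C ∨
     ((c p).S ≠ Working ∧ (c u).S ≠ Idle) ∨
     ((c p).S = (c u).S ∧ (c u).ph ≠ (c p).ph) ∨
     ((c u).S = Power ∧ (c u).ph ≠ (c p).ph) ∨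
     ((c p).S = Power ∧ (Child G c u ≠ ∅ ∨ (c u).ph ≠ (c p).ph)))

def IllegalRoot (G : SimpleGraph V) (r : V) (c : Config V) (u : V) : Prop :=
  u ≠ r ∧ (c u).P = none ∧ ¬ Detached G r c u

def IllegalLiveRoot (G : SimpleGraph V) (r : V) (c : Config V) (u : V) : Prop :=
  IllegalRoot G r c u ∧ ¬ Erroneous (c u).S

def IllegalChild (r : V) (c : Config V) (u : V) : Prop :=
  u ≠ r ∧ ∃ p, (c u).P = some p ∧ Erroneous (c p).S

def Isolated (G : SimpleGraph V) (c : Config V) (u : V) : Prop :=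
  (c u).S = WeakE ∨ (c u).S = Working ∨ StrongEReady G c u

def Ok (G : SimpleGraph V) (r : V) (c : Config V) (u : V) : Prop :=
  ¬ StrongConflict G c u ∧ ¬ Conflict G r c u ∧ ¬ PowerFaulty G c u ∧
  ¬ Faulty G r c u ∧ ¬ IllegalRoot G r c u ∧ ¬ IllegalChild r c u

def QuietSubTree (G : SimpleGraph V) (c : Config V) (u : V) : Prop :=
  ∀ v ∈ Child G c u, (c v).S = Idle ∧ (c v).ph = (c u).ph

def EndFirstPhase (G : SimpleGraph V) (c : Config V) (u : V) : Prop :=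
  (c u).S = Power ∧ QuietSubTree G c u ∧ ∀ v ∈ G.neighborSet u, (c v).C = (c u).C

def EndPhase (G : SimpleGraph V) (c : Config V) (u : V) : Prop :=
  (c u).S = Working ∧ QuietSubTree G c u

def EndLastPhase (G : SimpleGraph V) (c : Config V) (u : V) : Prop :=
  Child G c u = ∅ ∧ (EndFirstPhase G c u ∨ EndPhase G c u)

def EndIntermediatePhase (G : SimpleGraph V) (c : Config V) (u : V) : Prop :=
  Child G c u ≠ ∅ ∧ (EndFirstPhase G c u ∨ EndPhase G c u)

def Connection (G : SimpleGraph V) (r : V) (c : Config V) (u v : V) : Prop :=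
  Detached G r c u ∧ (Isolated G c u ∨ (c u).S = Idle) ∧
  G.Adj u v ∧ (c v).C ≠ (c u).C ∧ (c v).S = Power

def NewPhase (G : SimpleGraph V) (c : Config V) (u : V) : Prop :=
  ∃ p, (c u).P = some p ∧ QuietSubTree G c u ∧ (c u).S = Idle ∧ (c u).ph ≠ (c p).ph

/-- Guards of the rules RC1–RC6, R1–R7 of the algorithm. -/
def Guard (G : SimpleGraph V) (r : V) : Rule V → Config V → V → Prop
  | .RC1, c, u => u = r ∧ ¬ Conflict G r c u ∧ PowerFaulty G c u ∧ QuietSubTree G c u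
  | .RC2, c, u => u = r ∧ Detached G r c u ∧ StrongEReady G c u
  | .RC3, c, u => u = r ∧ Conflict G r c u
  | .RC4, c, u => u ≠ r ∧ StrongConflict G c u
  | .RC5, c, u => u ≠ r ∧ ¬ StrongConflict G c u ∧
      (Conflict G r c u ∨ Faulty G r c u ∨ PowerFaulty G c u ∨
       IllegalLiveRoot G r c u ∨ IllegalChild r c u)
  | .RC6, c, u => u ≠ r ∧ Detached G r c u ∧ Isolated G c u ∧
      ∀ v ∈ G.neighborSet u, (c v).C = (c u).C ∨ (c v).S ≠ Power
  | .R1, c, u => u = r ∧ Ok G r c u ∧ EndLastPhase G c u ∧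
      ∀ v ∈ G.neighborSet u, (c v).S ≠ StrongE
  | .R2, c, u => u = r ∧ Ok G r c u ∧ EndIntermediatePhase G c u
  | .R3 v, c, u => u ≠ r ∧ Ok G r c u ∧ Connection G r c u v
  | .R4, c, u => u ≠ r ∧ Ok G r c u ∧ NewPhase G c u ∧ Child G c u ≠ ∅
  | .R5, c, u => u ≠ r ∧ Ok G r c u ∧ NewPhase G c u ∧ Child G c u = ∅ ∧
      ∀ v ∈ G.neighborSet u, (c v).S ≠ StrongE
  | .R6, c, u => u ≠ r ∧ Ok G r c u ∧ EndIntermediatePhase G c u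
  | .R7, c, u => u ≠ r ∧ Ok G r c u ∧ (c u).P ≠ none ∧ EndLastPhase G c u

/-- Phase of the parent of `u` (or `u`'s own phase if it has no parent). -/
def parentPh (c : Config V) (u : V) : Bool :=
  match (c u).P with
  | some p => (c p).ph
  | none => (c u).ph

/-- The action of each rule: the new local state of the executing process `u`. -/
def execRule (c : Config V) (u : V) : Rule V → ProcState V
  | .RC1 => { c u with S := Working }
  | .RC2 => { c u with S := Working }
  | .RC3 => { c u with S := StrongE }
  | .RC4 => { c u with S := StrongE, P := none }
  | .RC5 => { c u with S := WeakE, P := none }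
  | .RC6 => { c u with S := Idle }
  | .R1 => { c u with C := !(c u).C, S := Power }
  | .R2 => { c u with ph := !(c u).ph, S := Working }
  | .R3 v => { c u with C := (c v).C, ph := (c v).ph, S := Idle, P := some v, TS := some v }
  | .R4 => { c u with ph := parentPh c u, S := Working }
  | .R5 => { c u with ph := parentPh c u, S := Power }
  | .R6 => { c u with S := Idle }
  | .R7 => { c u with S := Idle, P := none }

/-- A computation step: a nonempty set of enabled processes each atomically
executes one enabled rule; all other processes keep their state. -/
def IsStep (G : SimpleGraph V) (r : V) (c1 : Config V)
    (act : V → Option (Rule V)) (c2 : Config V) : Prop :=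
  (∃ u ρ, act u = some ρ) ∧
  ∀ u, (act u = none → c2 u = c1 u) ∧
       ∀ ρ, act u = some ρ → Guard G r ρ c1 u ∧ c2 u = execRule c1 u ρ

def Step (G : SimpleGraph V) (r : V) (c1 c2 : Config V) : Prop :=
  ∃ act, IsStep G r c1 act c2

/-- A process is enabled if the guard of some rule holds at it. -/
def Enabled (G : SimpleGraph V) (r : V) (c : Config V) (u : V) : Prop :=
  ∃ ρ : Rule V, Guard G r ρ c u

/-- Well-formed configurations: pointers designate neighbors, and the root has
no parent and only uses the statuses Power, Working, StrongE. -/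
def WellFormed (G : SimpleGraph V) (r : V) (c : Config V) : Prop :=
  (∀ u v, (c u).P = some v → G.Adj u v) ∧
  (∀ u v, (c u).TS = some v → G.Adj u v) ∧
  (c r).P = none ∧ (c r).TS = none ∧
  ((c r).S = Power ∨ (c r).S = Working ∨ (c r).S = StrongE)

/-- `PowerParent u`: some descendant of `u` (possibly `u`) may take the `Power`
status by a series of R4/R5 moves. -/
inductive PowerParent (c : Config V) : V → Prop
  | base (u p : V) : (c u).P = some p → (c u).S = Idle → (c p).S = Working →
      (c u).ph ≠ (c p).ph → PowerParent c u
  | step (u p : V) : (c u).P = some p → PowerParent c p → (c u).S = Idle →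
      (c u).ph = (c p).ph → PowerParent c u

def Influential (c : Config V) (u : V) : Prop :=
  (c u).S = Power ∨ PowerParent c u

/-- `u` lies on a branch rooted at `r` all of whose members are non-faulty,
and the root is not StrongE. -/
inductive InLegalTree (G : SimpleGraph V) (r : V) (c : Config V) : V → Prop
  | root : (c r).S ≠ StrongE → InLegalTree G r c r
  | child (u p : V) : (c u).P = some p → InLegalTree G r c p →
      ¬ Faulty G r c u → InLegalTree G r c u

def InsideLegalTree (G : SimpleGraph V) (r : V) (c : Config V) (u : V) : Prop :=
  InLegalTree G r c u ∧ (c u).S ≠ Power ∧ Child G c u ≠ ∅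

def UnSafe (G : SimpleGraph V) (r : V) (c : Config V) (u : V) : Prop :=
  InsideLegalTree G r c u ∧
    ∃ v ∈ G.neighborSet u, (c v).C ≠ (c u).C ∧ Influential c v

def UnRegular (G : SimpleGraph V) (r : V) (c : Config V) (u : V) : Prop :=
  ¬ Detached G r c u ∧ ¬ InLegalTree G r c u

/-- Infinite executions of the algorithm (by Theorem `no deadlock` there is no
terminal configuration). -/
structure Execution (G : SimpleGraph V) (r : V) where
  conf : ℕ → Config V
  act : ℕ → V → Option (Rule V)
  valid : ∀ i, IsStep G r (conf i) (act i) (conf (i + 1))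

/-- The suffix of an execution starting at time `k`. -/
def Execution.shift {G : SimpleGraph V} {r : V} (e : Execution G r) (k : ℕ) :
    Execution G r where
  conf := fun i => e.conf (k + i)
  act := fun i => e.act (k + i)
  valid := fun i => e.valid (k + i)

/-- The first round of `e` is completed by time `t`: every process enabled in
the initial configuration has executed a rule or been neutralized before `t`. -/
def CompletesRound (G : SimpleGraph V) (r : V) (e : Execution G r) (t : ℕ) : Prop :=
  ∀ u, Enabled G r (e.conf 0) u →
    ∃ j, j < t ∧ (e.act j u ≠ none ∨ ¬ Enabled G r (e.conf (j + 1)) u)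

/-- `RoundsElapsed G r e k t`: at least `k` rounds of `e` are completed by time `t`. -/
def RoundsElapsed (G : SimpleGraph V) (r : V) (e : Execution G r) : ℕ → ℕ → Prop
  | 0, t => t = 0
  | k + 1, t => ∃ s, s ≤ t ∧ RoundsElapsed G r e k s ∧
      CompletesRound G r (e.shift s) (t - s)

/-- The tree-construction rules R1–R7. -/
def TreeRule : Rule V → Prop := fun ρ =>
  ρ = Rule.R1 ∨ ρ = Rule.R2 ∨ (∃ v, ρ = Rule.R3 v) ∨ ρ = Rule.R4 ∨
  ρ = Rule.R5 ∨ ρ = Rule.R6 ∨ ρ = Rule.R7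

noncomputable def FaultyCount (G : SimpleGraph V) (r : V) (c : Config V) : ℕ :=
  {u | Faulty G r c u}.ncard

/-- Inside-safe executions: insideLegalTree processes execute only R1–R7 and
the number of Faulty processes stays constant. -/
def InsideSafeExec (G : SimpleGraph V) (r : V) (e : Execution G r) : Prop :=
  (∀ i u ρ, InsideLegalTree G r (e.conf i) u → e.act i u = some ρ → TreeRule ρ) ∧
  (∀ i, FaultyCount G r (e.conf i) = FaultyCount G r (e.conf 0))

/-- Safe executions. -/
def SafeExec (G : SimpleGraph V) (r : V) (e : Execution G r) : Prop :=
  (∀ i u ρ, InsideLegalTree G r (e.conf i) u → e.act i u = some ρ → TreeRule ρ) ∧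
  (∀ i u, Influential (e.conf i) u → UnRegular G r (e.conf i) u → e.act i u = none) ∧
  (∀ i u, ¬ PowerFaulty G (e.conf i) u → ¬ PowerFaulty G (e.conf (i + 1)) u) ∧
  (∀ i u, e.act i u ≠ some Rule.RC1 ∧ e.act i u ≠ some Rule.RC4 ∧
      e.act i u ≠ some Rule.RC3 ∧ e.act i u ≠ some Rule.RC2)

/-- Pseudo-regular executions. -/
def PseudoRegularExec (G : SimpleGraph V) (r : V) (e : Execution G r) : Prop :=
  SafeExec G r e ∧
  (∀ i u ρ, InLegalTree G r (e.conf i) u → e.act i u = some ρ → TreeRule ρ) ∧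
  (∀ i u, ¬ UnRegular G r (e.conf i) u → ¬ UnRegular G r (e.conf (i + 1)) u)

/-- Regular executions: pseudo-regular and all processes execute only R1–R7. -/
def RegularExec (G : SimpleGraph V) (r : V) (e : Execution G r) : Prop :=
  PseudoRegularExec G r e ∧ (∀ i u ρ, e.act i u = some ρ → TreeRule ρ)

/-- `u` executes rules infinitely often along `e`. -/
def ActsInfOften {G : SimpleGraph V} {r : V} (e : Execution G r) (u : V) : Prop :=
  ∀ k, ∃ i, k ≤ i ∧ e.act i u ≠ none

def A1 (G : SimpleGraph V) (r : V) (c : Config V) : Prop :=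
  ∀ u, ¬ Faulty G r c u ∧ ¬ IllegalLiveRoot G r c u

def A2 (G : SimpleGraph V) (r : V) (c : Config V) : Prop :=
  A1 G r c ∧ ∀ u, ¬ UnSafe G r c u

def A3 (G : SimpleGraph V) (r : V) (c : Config V) : Prop :=
  A2 G r c ∧ ∀ u, ¬ Influential c u ∨ InLegalTree G r c u

def A4 (G : SimpleGraph V) (r : V) (c : Config V) : Prop :=
  A3 G r c ∧ ∀ u, (c u).S ≠ StrongE

def PIC (r : V) (c : Config V) (u : V) : Prop :=
  Influential c u ∧ (c u).C ≠ (c r).C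

def PICPowerParent (r : V) (c : Config V) (u : V) : Prop :=
  PIC r c u ∧ PowerParent c u

end BFS

namespace BFS

open Filter Status

variable {V : Type} {G : SimpleGraph V} {r : V}

lemma eventuallyConst_of_change_eq_or_last {α : Type*} {f : ℕ → α} {c : α} {k : ℕ}
    (hf : ∀ t, k ≤ t → f (t + 1) ≠ f t → f (t + 1) = c ∨ ∀ s, t + 1 ≤ s → f s = f (t + 1)) :
    EventuallyConst f atTop := by
  by_cases hlast : ∃ t, k ≤ t ∧ ∀ s, t + 1 ≤ s → f s = f (t + 1)
  · obtain ⟨t, -, ht⟩ := hlast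
    exact eventuallyConst_atTop.2 ⟨t + 1, ht⟩
  have hstep : ∀ t, k ≤ t → f (t + 1) = f t ∨ f (t + 1) = c := fun t ht =>
    or_iff_not_imp_left.2 fun hne => (hf t ht hne).resolve_right fun h => hlast ⟨t, ht, h⟩
  by_cases hc : ∃ t, k ≤ t ∧ f t = c
  · obtain ⟨t, ht, hft⟩ := hc
    refine eventuallyConst_atTop.2 ⟨t, fun s hs => ?_⟩
    induction s, hs using Nat.le_induction with
    | base => rfl
    | succ s hs ih =>
      rcases hstep s (ht.trans hs) with h | h
      · rw [h, ih]
      · rw [h, hft]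
  · push Not at hc
    exact eventuallyConst_atTop_nat.2
      ⟨k, fun t ht => (hstep t ht).resolve_right (hc (t + 1) (by omega))⟩

/-- The states from which a process with a differently colored neighbor can only move to `Power`. -/
def LeafOrPower (G : SimpleGraph V) (c : Config V) (v : V) : Prop :=
  (c v).S = Power ∨ ((c v).P ≠ none ∧ (c v).S ≠ Working ∧ Child G c v = ∅)

section Guards

variable {c : Config V} {u v : V} {ρ : Rule V}

lemma not_endFirstPhase_or_endPhase (hadj : G.Adj u v) (hC : (c u).C ≠ (c v).C)
    (hW : (c v).S ≠ Working) : ¬ (EndFirstPhase G c v ∨ EndPhase G c v) := by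
  rintro (⟨-, -, hcol⟩ | ⟨hW', -⟩)
  · exact hC (hcol u hadj.symm)
  · exact hW hW'

lemma eq_R5_of_guard_of_leafOrPower (hρ : TreeRule ρ) (hg : Guard G r ρ c v)
    (hadj : G.Adj u v) (hC : (c u).C ≠ (c v).C) (hv : LeafOrPower G c v) : ρ = Rule.R5 := by
  have hW : (c v).S ≠ Working := by
    rcases hv with hP | ⟨-, hW, -⟩
    · simp [hP]
    · exact hW
  have hend := not_endFirstPhase_or_endPhase hadj hC hW
  rcases hρ with rfl | rfl | ⟨x, rfl⟩ | rfl | rfl | rfl | rfl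
  · exact absurd hg.2.2.1.2 hend
  · exact absurd hg.2.2.2 hend
  · obtain ⟨hvr, -, ⟨-, hroot, hnP⟩, -⟩ := hg
    rcases hv with hP | ⟨hP, -, -⟩
    · exact absurd hP hnP
    · exact absurd (hroot.resolve_right hvr) hP
  · rcases hv with hP | ⟨-, -, hch⟩
    · obtain ⟨-, -, -, hI, -⟩ := hg.2.2.1
      rw [hP] at hI
      cases hI
    · exact absurd hch hg.2.2.2
  · rfl
  · exact absurd hg.2.2.2 hend
  · exact absurd hg.2.2.2.2 hend

end Guards

namespace Execution

variable (e : Execution G r) {i : ℕ} {u v : V}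

lemma conf_succ_of_act_eq_none (h : e.act i v = none) : e.conf (i + 1) v = e.conf i v :=
  ((e.valid i).2 v).1 h

lemma guard_of_act_eq_some {ρ : Rule V} (h : e.act i v = some ρ) : Guard G r ρ (e.conf i) v :=
  (((e.valid i).2 v).2 ρ h).1

lemma conf_succ_of_act_eq_some {ρ : Rule V} (h : e.act i v = some ρ) :
    e.conf (i + 1) v = execRule (e.conf i) v ρ :=
  (((e.valid i).2 v).2 ρ h).2

/-- A process acquires children only by R3 moves pointing at it, which require it to be `Power`. -/
lemma child_succ_eq_empty (hS : (e.conf i v).S ≠ Power) (hch : Child G (e.conf i) v = ∅) :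
    Child G (e.conf (i + 1)) v = ∅ := by
  refine Set.eq_empty_iff_forall_notMem.2 fun y ⟨hadj, hy⟩ => ?_
  have hold : (e.conf i y).P ≠ some v := fun h => (Set.eq_empty_iff_forall_notMem.1 hch) y ⟨hadj, h⟩
  cases hact : e.act i y with
  | none => exact hold (e.conf_succ_of_act_eq_none hact ▸ hy)
  | some ρ =>
    have hg := e.guard_of_act_eq_some hact
    rw [e.conf_succ_of_act_eq_some hact] at hy
    cases ρ <;> simp only [execRule, reduceCtorEq] at hy <;> try exact hold hy
    case R3 x =>
      cases Option.some.inj hy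
      exact hS hg.2.2.2.2.2.2

lemma leafOrPower_of_color_change (h : (e.conf (i + 1) v).C ≠ (e.conf i v).C) :
    LeafOrPower G (e.conf (i + 1)) v := by
  cases hact : e.act i v with
  | none => exact absurd (congrArg ProcState.C (e.conf_succ_of_act_eq_none hact)) h
  | some ρ =>
    have hg := e.guard_of_act_eq_some hact
    have hnext := e.conf_succ_of_act_eq_some hact
    cases ρ <;> rw [hnext] at h <;> try exact absurd rfl h
    case R1 => exact Or.inl (by rw [hnext]; rfl)
    case R3 x =>
      obtain ⟨-, -, ⟨hch, -, hnP⟩, -⟩ := hg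
      refine Or.inr ⟨by simp [hnext, execRule], by simp [hnext, execRule], ?_⟩
      exact e.child_succ_eq_empty hnP hch

variable {e}

lemma leafOrPower_succ (htree : ∀ i v ρ, e.act i v = some ρ → TreeRule ρ) (hadj : G.Adj u v)
    (hC : (e.conf i u).C ≠ (e.conf i v).C) (hv : LeafOrPower G (e.conf i) v) :
    LeafOrPower G (e.conf (i + 1)) v ∧ (e.conf (i + 1) v).C = (e.conf i v).C := by
  cases hact : e.act i v with
  | none =>
    have hsame := e.conf_succ_of_act_eq_none hact
    refine ⟨?_, by rw [hsame]⟩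
    by_cases hP : (e.conf i v).S = Power
    · exact Or.inl (hsame ▸ hP)
    · obtain ⟨hpar, hW, hch⟩ := hv.resolve_left hP
      exact Or.inr ⟨hsame ▸ hpar, hsame ▸ hW, e.child_succ_eq_empty hP hch⟩
  | some ρ =>
    have hρ := eq_R5_of_guard_of_leafOrPower (htree i v ρ hact) (e.guard_of_act_eq_some hact)
      hadj hC hv
    subst hρ
    refine ⟨Or.inl ?_, ?_⟩ <;> rw [e.conf_succ_of_act_eq_some hact] <;> rfl

lemma color_eq_of_leafOrPower (htree : ∀ i v ρ, e.act i v = some ρ → TreeRule ρ)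
    (hadj : G.Adj u v) {k : ℕ} (hu : ∀ i, k ≤ i → (e.conf i u).C = (e.conf k u).C)
    (hi : k ≤ i) (hv : LeafOrPower G (e.conf i) v) (hC : (e.conf i v).C ≠ (e.conf k u).C) :
    ∀ s, i ≤ s → (e.conf s v).C = (e.conf i v).C := by
  suffices ∀ s, i ≤ s → LeafOrPower G (e.conf s) v ∧ (e.conf s v).C = (e.conf i v).C from
    fun s hs => (this s hs).2
  intro s hs
  induction s, hs using Nat.le_induction with
  | base => exact ⟨hv, rfl⟩
  | succ s hs ih =>
    have hCs : (e.conf s u).C ≠ (e.conf s v).C := by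
      rw [hu s (hi.trans hs), ih.2]
      exact Ne.symm hC
    obtain ⟨hnext, hcol⟩ := leafOrPower_succ htree hadj hCs ih.1
    exact ⟨hnext, hcol.trans ih.2⟩

lemma eventuallyConst_color_of_adj (htree : ∀ i v ρ, e.act i v = some ρ → TreeRule ρ)
    (hadj : G.Adj u v) (hu : EventuallyConst (fun i => (e.conf i u).C) atTop) :
    EventuallyConst (fun i => (e.conf i v).C) atTop := by
  obtain ⟨k, hk⟩ := eventuallyConst_atTop.1 hu
  refine eventuallyConst_of_change_eq_or_last (c := (e.conf k u).C) (k := k) fun t ht hch => ?_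
  refine or_iff_not_imp_left.2 fun hne => ?_
  exact color_eq_of_leafOrPower htree hadj hk (ht.trans t.le_succ)
    (e.leafOrPower_of_color_change hch) hne

lemma eventuallyConst_color_of_reachable (htree : ∀ i v ρ, e.act i v = some ρ → TreeRule ρ)
    (huv : G.Reachable u v) (hu : EventuallyConst (fun i => (e.conf i u).C) atTop) :
    EventuallyConst (fun i => (e.conf i v).C) atTop := by
  obtain ⟨p⟩ := huv
  induction p with
  | nil => exact hu
  | cons hadj _ ih => exact ih (eventuallyConst_color_of_adj htree hadj hu)

end Execution

theorem stmt11_general {V : Type} [Fintype V]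
    (G : SimpleGraph V) (r : V) (hconn : G.Connected)
    (e : Execution G r) (hreg : RegularExec G r e)
    (u : V) (hu : ∀ i, (e.conf i u).C = (e.conf 0 u).C) :
    (∃ k, ∀ i, k ≤ i → ∀ v ∈ G.neighborSet u,
      (e.conf (i + 1) v).C = (e.conf i v).C) ∧
    (∃ k, ∀ i, k ≤ i → ∀ w : V, (e.conf (i + 1) w).C = (e.conf i w).C) := by
  have hsettled : ∀ v, G.Reachable u v →
      ∀ᶠ i in atTop, (e.conf (i + 1) v).C = (e.conf i v).C := fun v huv =>
    eventually_atTop.2 <| eventuallyConst_atTop_nat.1 <|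
      Execution.eventuallyConst_color_of_reachable hreg.2 huv
        (eventuallyConst_atTop.2 ⟨0, fun i _ => hu i⟩)
  constructor
  · exact eventually_atTop.1 <| (Set.toFinite _).eventually_all.2 fun v hv =>
      hsettled v (SimpleGraph.Adj.reachable hv)
  · exact eventually_atTop.1 <| eventually_all.2 fun w => hsettled w (hconn.preconnected u w)

/-- in a regular execution, if `u` never changes its color then
some suffix has no color change at any neighbor of `u`; consequently some suffix
has no color change at any process at all. -/
theorem stmt11 {V : Type} [Fintype V] [DecidableEq V]
    (G : SimpleGraph V) (r : V) (hconn : G.Connected)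
    (e : Execution G r) (hreg : RegularExec G r e)
    (u : V) (hu : ∀ i, (e.conf i u).C = (e.conf 0 u).C) :
    (∃ k, ∀ i, k ≤ i → ∀ v ∈ G.neighborSet u,
      (e.conf (i + 1) v).C = (e.conf i v).C) ∧
    (∃ k, ∀ i, k ≤ i → ∀ w : V, (e.conf (i + 1) w).C = (e.conf i w).C) :=
  stmt11_general G r hconn e hreg u hu

end BFS
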